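/- arXiv:1707.05714 — 2 statements merged into one kernel-verified Lean document; each statement's English description precedes it below -/
import Mathlib

section
/- If a finite-state Markov chain with transition kernel P is irreducible and aperiodic, then it has a unique stationary distribution μ, and there exist constants C > 0 and α ∈ [0,1) such that for every initial distribution ν and every t ≥ 0, the total variation (ℓ¹) distance between the t-step distribution νPᵗ and μ is at most C·αᵗ. -/
open Finset

set_option linter.unusedSectionVars false

namespace Stmt0Aux

variable {S : Type*} [Fintype S] [DecidableEq S]

/-- action of a matrix on a row vector -/
def act (x : S → ℝ) (M : Matrix S S ℝ) : S → ℝ := fun s' => ∑ s0, x s0 * M s0 s'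

lemma act_act (x : S → ℝ) (M N : Matrix S S ℝ) : act (act x M) N = act x (M * N) := by
  funext s'
  simp only [act, Matrix.mul_apply, Finset.sum_mul, Finset.mul_sum]
  rw [Finset.sum_comm]
  simp [mul_assoc]

lemma act_sub (x y : S → ℝ) (M : Matrix S S ℝ) : act (x - y) M = act x M - act y M := by
  funext s'
  simp [act, sub_mul, Finset.sum_sub_distrib]

lemma pow_entry_nonneg (P : Matrix S S ℝ) (hP0 : ∀ s s', 0 ≤ P s s') :
    ∀ (t : ℕ) s s', 0 ≤ (P ^ t) s s' := by
  intro t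
  induction t with
  | zero => intro s s'; simp [Matrix.one_apply]; split <;> norm_num
  | succ n ih =>
    intro s s'
    rw [pow_succ, Matrix.mul_apply]
    exact Finset.sum_nonneg fun u _ => mul_nonneg (ih s u) (hP0 u s')

lemma pow_rowsum (P : Matrix S S ℝ) (hP1 : ∀ s, ∑ s', P s s' = 1) :
    ∀ (t : ℕ) s, ∑ s', (P ^ t) s s' = 1 := by
  intro t
  induction t with
  | zero => intro s; simp [Matrix.one_apply]
  | succ n ih =>
    intro s
    simp only [pow_succ, Matrix.mul_apply]
    rw [Finset.sum_comm]
    have h : ∀ u, ∑ s', (P ^ n) s u * P u s' = (P ^ n) s u := fun u => by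
      rw [← Finset.mul_sum, hP1, mul_one]
    simp only [h]
    exact ih s

lemma pow_add_entry_le (P : Matrix S S ℝ) (hP0 : ∀ s s', 0 ≤ P s s') (a b : ℕ) (s u s' : S) :
    (P ^ a) s u * (P ^ b) u s' ≤ (P ^ (a + b)) s s' := by
  rw [pow_add, Matrix.mul_apply]
  exact Finset.single_le_sum (fun i _ => mul_nonneg (pow_entry_nonneg P hP0 a s i)
    (pow_entry_nonneg P hP0 b i s')) (Finset.mem_univ u)

lemma sum_act (Q : Matrix S S ℝ) (hQ1 : ∀ s, ∑ s', Q s s' = 1) (x : S → ℝ) :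
    ∑ s', act x Q s' = ∑ s, x s := by
  simp only [act]
  rw [Finset.sum_comm]
  simp [← Finset.mul_sum, hQ1]


lemma nonexp (Q : Matrix S S ℝ) (hQ0 : ∀ s s', 0 ≤ Q s s') (hQ1 : ∀ s, ∑ s', Q s s' = 1)
    (x : S → ℝ) : ∑ s', |act x Q s'| ≤ ∑ s, |x s| := by
  have h1 : ∀ s', |act x Q s'| ≤ ∑ s0, |x s0| * Q s0 s' := by
    intro s'
    refine (Finset.abs_sum_le_sum_abs _ _).trans ?_
    refine Finset.sum_le_sum fun i _ => ?_
    rw [abs_mul, abs_of_nonneg (hQ0 i s')]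
  calc ∑ s', |act x Q s'| ≤ ∑ s', ∑ s0, |x s0| * Q s0 s' := Finset.sum_le_sum fun s' _ => h1 s'
    _ = ∑ s0, |x s0| := by
        rw [Finset.sum_comm]
        refine Finset.sum_congr rfl fun s0 _ => ?_
        rw [← Finset.mul_sum, hQ1, mul_one]

lemma contract (Q : Matrix S S ℝ) (δ : ℝ) (hδ0 : 0 ≤ δ) (hQδ : ∀ s s', δ ≤ Q s s')
    (hQ1 : ∀ s, ∑ s', Q s s' = 1) (x : S → ℝ) (hx : ∑ s, x s = 0) :
    ∑ s', |act x Q s'| ≤ (1 - (Fintype.card S : ℝ) * δ) * ∑ s, |x s| := by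
  have key : ∀ s', act x Q s' = ∑ s0, x s0 * (Q s0 s' - δ) := by
    intro s'
    simp only [act, mul_sub, Finset.sum_sub_distrib, ← Finset.sum_mul, hx, zero_mul, sub_zero]
  have h1 : ∀ s', |act x Q s'| ≤ ∑ s0, |x s0| * (Q s0 s' - δ) := by
    intro s'
    rw [key s']
    refine (Finset.abs_sum_le_sum_abs _ _).trans ?_
    refine Finset.sum_le_sum fun i _ => ?_
    rw [abs_mul, abs_of_nonneg (sub_nonneg.2 (hQδ i s'))]
  calc ∑ s', |act x Q s'| ≤ ∑ s', ∑ s0, |x s0| * (Q s0 s' - δ) :=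
        Finset.sum_le_sum fun s' _ => h1 s'
    _ = ∑ s0, |x s0| * (1 - (Fintype.card S : ℝ) * δ) := by
        rw [Finset.sum_comm]
        refine Finset.sum_congr rfl fun s0 _ => ?_
        rw [← Finset.mul_sum]
        congr 1
        rw [Finset.sum_sub_distrib, hQ1, Finset.sum_const, Finset.card_univ, nsmul_eq_mul]
    _ = (1 - (Fintype.card S : ℝ) * δ) * ∑ s, |x s| := by
        rw [Finset.mul_sum]
        exact Finset.sum_congr rfl fun s _ => mul_comm _ _


/-- A set of naturals closed under addition containing n and n+1 (n ≥ 1)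
contains every t ≥ n*n. -/
lemma consecutive_mem {R : Set ℕ} (hadd : ∀ a ∈ R, ∀ b ∈ R, a + b ∈ R)
    {n : ℕ} (hn : 0 < n) (h1 : n ∈ R) (h2 : n + 1 ∈ R) :
    ∀ t, n * n ≤ t → t ∈ R := by
  have hmul : ∀ (k m : ℕ), 0 < k → m ∈ R → k * m ∈ R := by
    intro k
    induction k with
    | zero => intro m h; omega
    | succ j ih =>
      intro m hk hm
      rcases Nat.eq_zero_or_pos j with hj | hj
      · subst hj; simpa using hm
      · have := ih m hj hm
        have : j * m + m ∈ R := hadd _ this _ hm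
        simpa [Nat.succ_mul] using this
  intro t ht
  set q := t / n with hq
  set r := t % n with hr
  have hrn : r < n := Nat.mod_lt _ hn
  have hqd : n * q + r = t := Nat.div_add_mod t n
  have hqn : n ≤ q := by
    rw [hq]
    exact Nat.le_div_iff_mul_le hn |>.2 (by nlinarith)
  have hrq : r ≤ q := le_trans hrn.le hqn
  have e1 : (q - r) * n = q * n - r * n := Nat.sub_mul q r n
  have e2 : r * (n + 1) = r * n + r := by ring
  have e3 : r * n ≤ q * n := Nat.mul_le_mul_right n hrq
  have e4 : n * q = q * n := mul_comm n q
  have hdecomp : t = (q - r) * n + r * (n + 1) := by omega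
  rcases Nat.eq_zero_or_pos r with hr0 | hr0
  · -- t = q * n
    have : t = q * n := by omega
    rw [this]
    exact hmul q n (by omega) h1
  rcases Nat.eq_zero_or_pos (q - r) with hqr | hqr
  · have : t = r * (n + 1) := by omega
    rw [this]
    exact hmul r (n+1) hr0 h2
  · rw [hdecomp]
    exact hadd _ (hmul _ n hqr h1) _ (hmul _ (n+1) hr0 h2)

/-- From an add-closed set of positive naturals whose only common divisor is 1,
produce consecutive elements. -/
lemma exists_consecutive {R : Set ℕ} (hpos : ∀ a ∈ R, 0 < a)
    (hadd : ∀ a ∈ R, ∀ b ∈ R, a + b ∈ R)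
    (hgcd : ∀ d : ℕ, (∀ a ∈ R, d ∣ a) → d = 1) :
    ∃ n, 0 < n ∧ n ∈ R ∧ n + 1 ∈ R := by
  classical
  -- the subgroup of differences
  let D : AddSubgroup ℤ :=
    { carrier := {x : ℤ | ∃ m n : ℕ, (m ∈ R ∨ m = 0) ∧ (n ∈ R ∨ n = 0) ∧ x = (m : ℤ) - n}
      zero_mem' := ⟨0, 0, Or.inr rfl, Or.inr rfl, by simp⟩
      add_mem' := by
        rintro x y ⟨m, n, hm, hn, rfl⟩ ⟨m', n', hm', hn', rfl⟩
        refine ⟨m + m', n + n', ?_, ?_, by push_cast; ring⟩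
        · rcases hm with hm | hm
          · rcases hm' with hm' | hm'
            · exact Or.inl (hadd _ hm _ hm')
            · subst hm'; simpa using Or.inl hm
          · subst hm; simpa using hm'
        · rcases hn with hn | hn
          · rcases hn' with hn' | hn'
            · exact Or.inl (hadd _ hn _ hn')
            · subst hn'; simpa using Or.inl hn
          · subst hn; simpa using hn'
      neg_mem' := by
        rintro x ⟨m, n, hm, hn, rfl⟩
        exact ⟨n, m, hn, hm, by ring⟩ }
  let G : AddSubgroup ℤ := AddSubgroup.closure ((fun a : ℕ => (a : ℤ)) '' R)
  obtain ⟨g, hg⟩ := Int.subgroup_cyclic G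
  have hdvd : ∀ a ∈ R, g.natAbs ∣ a := by
    intro a ha
    have : (a : ℤ) ∈ G := AddSubgroup.subset_closure ⟨a, ha, rfl⟩
    rw [hg, AddSubgroup.mem_closure_singleton] at this
    obtain ⟨z, hz⟩ := this
    have hd : g ∣ (a : ℤ) := ⟨z, by rw [← hz, zsmul_eq_mul]; exact mul_comm _ _⟩
    simpa using Int.natAbs_dvd_natAbs.mpr hd
  have hg1 : g.natAbs = 1 := hgcd _ hdvd
  have hone : (1 : ℤ) ∈ G := by
    rw [hg, AddSubgroup.mem_closure_singleton]
    rcases Int.natAbs_eq_iff.1 hg1 with h | h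
    · exact ⟨1, by simp [h]⟩
    · exact ⟨-1, by simp [h]⟩
  have hGD : G ≤ D := by
    apply AddSubgroup.closure_le D |>.2
    rintro x ⟨a, ha, rfl⟩
    exact ⟨a, 0, Or.inl ha, Or.inr rfl, by simp⟩
  obtain ⟨m, n, hm, hn, hmn⟩ := hGD hone
  have hmn' : m = n + 1 := by omega
  rcases hn with hn | hn
  · exact ⟨n, hpos n hn, hn, by rw [← hmn']; rcases hm with hm | hm; exact hm; omega⟩
  · -- n = 0, so m = 1 ∈ R
    subst hn
    have h1R : 1 ∈ R := by
      rcases hm with hm | hm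
      · rwa [hmn'] at hm
      · omega
    exact ⟨1, one_pos, h1R, hadd 1 h1R 1 h1R⟩



lemma primitive [Nonempty S] (P : Matrix S S ℝ) (hP0 : ∀ s s', 0 ≤ P s s')
    (hirr : ∀ s s', ∃ t : ℕ, 0 < t ∧ 0 < (P ^ t) s s')
    (haper : ∀ s, ∀ d : ℕ, (∀ t : ℕ, 0 < t → 0 < (P ^ t) s s → d ∣ t) → d = 1) :
    ∃ T, 0 < T ∧ ∀ s s', 0 < (P ^ T) s s' := by
  classical
  have hdiag : ∀ s, ∃ N, ∀ t, N ≤ t → 0 < (P ^ t) s s := by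
    intro s
    set R : Set ℕ := {t | 0 < t ∧ 0 < (P ^ t) s s} with hR
    have hpos : ∀ a ∈ R, 0 < a := fun a ha => ha.1
    have hadd : ∀ a ∈ R, ∀ b ∈ R, a + b ∈ R := by
      rintro a ⟨ha0, ha⟩ b ⟨hb0, hb⟩
      exact ⟨by omega, lt_of_lt_of_le (mul_pos ha hb) (pow_add_entry_le P hP0 a b s s s)⟩
    have hgcd : ∀ d : ℕ, (∀ a ∈ R, d ∣ a) → d = 1 := fun d hd =>
      haper s d (fun t ht hpt => hd t ⟨ht, hpt⟩)
    obtain ⟨n, hn, h1, h2⟩ := exists_consecutive hpos hadd hgcd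
    exact ⟨n * n, fun t ht => (consecutive_mem hadd hn h1 h2 t ht).2⟩
  choose N hN using hdiag
  choose t0 ht0pos ht0 using hirr
  refine ⟨1 + (∑ s, N s) + (∑ p : S × S, t0 p.1 p.2), by omega, ?_⟩
  intro s s'
  have hNle : N s ≤ ∑ u, N u :=
    Finset.single_le_sum (fun u _ => Nat.zero_le _) (Finset.mem_univ s)
  have htle : t0 s s' ≤ ∑ p : S × S, t0 p.1 p.2 :=
    Finset.single_le_sum (fun p _ => Nat.zero_le (t0 p.1 p.2)) (Finset.mem_univ (s, s'))
  set T := 1 + (∑ s, N s) + (∑ p : S × S, t0 p.1 p.2) with hT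
  have h1 : 0 < (P ^ (T - t0 s s')) s s := hN s _ (by omega)
  have h2 : (0:ℝ) < (P ^ (T - t0 s s')) s s * (P ^ (t0 s s')) s s' :=
    mul_pos h1 (ht0 s s')
  have h3 := pow_add_entry_le P hP0 (T - t0 s s') (t0 s s') s s s'
  rw [Nat.sub_add_cancel (by omega)] at h3
  linarith

end Stmt0Aux


open Stmt0Aux in
/-- If a finite-state Markov chain with transition matrix `P` is irreducible and
aperiodic, then it has a unique stationary distribution `μ`, and there exist
`C > 0` and `α ∈ [0,1)` such that for every initial distribution `ν` and every
`t`, `‖νPᵗ − μ‖₁ ≤ C·αᵗ`. -/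
theorem stmt_0 {S : Type*} [Fintype S] [DecidableEq S] [Nonempty S]
    (P : Matrix S S ℝ)
    (hP0 : ∀ s s', 0 ≤ P s s')
    (hP1 : ∀ s, ∑ s', P s s' = 1)
    (hirr : ∀ s s', ∃ t : ℕ, 0 < t ∧ 0 < (P ^ t) s s')
    (haper : ∀ s, ∀ d : ℕ, (∀ t : ℕ, 0 < t → 0 < (P ^ t) s s → d ∣ t) → d = 1) :
    ∃ μ : S → ℝ,
      ((∀ s, 0 ≤ μ s) ∧ (∑ s, μ s = 1) ∧ (∀ s', ∑ s, μ s * P s s' = μ s')) ∧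
      (∀ μ' : S → ℝ,
        ((∀ s, 0 ≤ μ' s) ∧ (∑ s, μ' s = 1) ∧ (∀ s', ∑ s, μ' s * P s s' = μ' s')) →
        μ' = μ) ∧
      ∃ C : ℝ, 0 < C ∧ ∃ α : ℝ, 0 ≤ α ∧ α < 1 ∧
        ∀ ν : S → ℝ, (∀ s, 0 ≤ ν s) → (∑ s, ν s = 1) →
          ∀ t : ℕ, ∑ s, |(∑ s0, ν s0 * (P ^ t) s0 s) - μ s| ≤ C * α ^ t := by
  classical
  obtain ⟨T, hTpos0, hTpos⟩ := Stmt0Aux.primitive P hP0 hirr haper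
  set n : ℕ := Fintype.card S with hn
  have hn0 : 0 < n := Fintype.card_pos
  have hn0' : (0:ℝ) < n := by exact_mod_cast hn0
  set Q : Matrix S S ℝ := P ^ T with hQdef
  have hQ0 : ∀ s s', 0 ≤ Q s s' := fun s s' => pow_entry_nonneg P hP0 T s s'
  have hQ1 : ∀ s, ∑ s', Q s s' = 1 := fun s => pow_rowsum P hP1 T s
  -- minimal entry
  have hne : (Finset.univ : Finset (S × S)).Nonempty := Finset.univ_nonempty
  set δ : ℝ := Finset.inf' Finset.univ hne (fun p : S × S => Q p.1 p.2) with hδdef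
  have hδle : ∀ s s', δ ≤ Q s s' := fun s s' => Finset.inf'_le _ (Finset.mem_univ (s, s'))
  have hδ0 : 0 < δ := (Finset.lt_inf'_iff hne).2 fun p _ => hTpos p.1 p.2
  set K : ℝ := 1 - (n : ℝ) * δ with hKdef
  have hK1 : K < 1 := by
    have : 0 < (n:ℝ) * δ := mul_pos hn0' hδ0
    rw [hKdef]; linarith
  have hK0 : 0 ≤ K := by
    have a := Classical.arbitrary S
    have h1 : (n:ℝ) * δ ≤ 1 := by
      calc (n:ℝ) * δ = ∑ _s' : S, δ := by
            rw [Finset.sum_const, Finset.card_univ, nsmul_eq_mul]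
        _ ≤ ∑ s', Q a s' := Finset.sum_le_sum fun s' _ => hδle a s'
        _ = 1 := hQ1 a
    rw [hKdef]; linarith
  -- the simplex
  set Δ : Set (S → ℝ) := {ν | (∀ s, 0 ≤ ν s) ∧ ∑ s, ν s = 1} with hΔdef
  have hclosed : IsClosed Δ := by
    have hrw : Δ = (⋂ s, {ν : S → ℝ | 0 ≤ ν s}) ∩ {ν : S → ℝ | ∑ s, ν s = 1} := by
      ext ν; simp [hΔdef, Set.mem_iInter]
    rw [hrw]
    exact IsClosed.inter
      (isClosed_iInter fun s => isClosed_le continuous_const (continuous_apply s))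
      (isClosed_eq (continuous_finset_sum _ fun s _ => continuous_apply s) continuous_const)
  haveI : CompleteSpace ↥Δ := hclosed.completeSpace_coe
  haveI : Nonempty ↥Δ := by
    refine ⟨⟨fun _ => (n:ℝ)⁻¹, fun s => by positivity, ?_⟩⟩
    rw [Finset.sum_const, Finset.card_univ, nsmul_eq_mul, ← hn]
    field_simp
  -- membership preservation
  have hactmem : ∀ (M : Matrix S S ℝ), (∀ s s', 0 ≤ M s s') → (∀ s, ∑ s', M s s' = 1) →
      ∀ ν ∈ Δ, act ν M ∈ Δ := by
    intro M hM0 hM1 ν hν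
    refine ⟨fun s' => Finset.sum_nonneg fun s0 _ => mul_nonneg (hν.1 s0) (hM0 s0 s'), ?_⟩
    rw [sum_act M hM1 ν]
    exact hν.2
  set g : ↥Δ → ↥Δ := fun ν => ⟨act ν.1 Q, hactmem Q hQ0 hQ1 ν.1 ν.2⟩ with hgdef
  have hgdist : ∀ ν ν' : ↥Δ, ∑ s, |(g ν).1 s - (g ν').1 s| ≤ K * ∑ s, |ν.1 s - ν'.1 s| := by
    intro ν ν'
    have hzero : ∑ s, (ν.1 - ν'.1) s = 0 := by
      simp only [Pi.sub_apply]
      rw [Finset.sum_sub_distrib, ν.2.2, ν'.2.2]; ring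
    have h := contract Q δ hδ0.le hδle hQ1 (ν.1 - ν'.1) hzero
    rw [act_sub] at h
    simpa [hgdef] using h
  have hgiter : ∀ (m : ℕ) (ν ν' : ↥Δ),
      ∑ s, |(g^[m] ν).1 s - (g^[m] ν').1 s| ≤ K ^ m * ∑ s, |ν.1 s - ν'.1 s| := by
    intro m
    induction m with
    | zero => intro ν ν'; simp
    | succ j ih =>
      intro ν ν'
      rw [Function.iterate_succ_apply', Function.iterate_succ_apply']
      calc ∑ s, |(g (g^[j] ν)).1 s - (g (g^[j] ν')).1 s|
          ≤ K * ∑ s, |(g^[j] ν).1 s - (g^[j] ν').1 s| := hgdist _ _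
        _ ≤ K * (K ^ j * ∑ s, |ν.1 s - ν'.1 s|) :=
            mul_le_mul_of_nonneg_left (ih ν ν') hK0
        _ = K ^ (j + 1) * ∑ s, |ν.1 s - ν'.1 s| := by ring
  -- choose m so that n * K^m < 1
  obtain ⟨m, hm⟩ := exists_pow_lt_of_lt_one (show (0:ℝ) < (n:ℝ)⁻¹ by positivity) hK1
  have hcm : (n:ℝ) * K ^ m < 1 := by
    calc (n:ℝ) * K ^ m < (n:ℝ) * (n:ℝ)⁻¹ := by
          exact mul_lt_mul_of_pos_left hm hn0'
      _ = 1 := mul_inv_cancel₀ hn0'.ne'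
  have hKm0 : 0 ≤ (n:ℝ) * K ^ m := by positivity
  set c : NNReal := Real.toNNReal ((n:ℝ) * K ^ m) with hcdef
  have hcK : (c : ℝ) = (n:ℝ) * K ^ m := Real.coe_toNNReal _ hKm0
  have hcon : ContractingWith c (g^[m]) := by
    constructor
    · have : (c:ℝ) < 1 := by rw [hcK]; exact hcm
      exact_mod_cast this
    · apply LipschitzWith.of_dist_le_mul
      intro ν ν'
      rw [Subtype.dist_eq]
      have hd0 : 0 ≤ (c:ℝ) * dist ν ν' := by positivity
      apply (dist_pi_le_iff hd0).2
      intro b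
      rw [Real.dist_eq]
      have h1 : |(g^[m] ν).1 b - (g^[m] ν').1 b| ≤ ∑ s, |(g^[m] ν).1 s - (g^[m] ν').1 s| :=
        Finset.single_le_sum (f := fun s => |(g^[m] ν).1 s - (g^[m] ν').1 s|)
          (fun s _ => abs_nonneg _) (Finset.mem_univ b)
      have h2 := hgiter m ν ν'
      have h3 : ∑ s, |ν.1 s - ν'.1 s| ≤ (n:ℝ) * dist ν ν' := by
        calc ∑ s, |ν.1 s - ν'.1 s| ≤ ∑ _s : S, dist ν ν' := by
              refine Finset.sum_le_sum fun s _ => ?_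
              rw [← Real.dist_eq]
              calc dist (ν.1 s) (ν'.1 s) ≤ dist ν.1 ν'.1 := dist_le_pi_dist ν.1 ν'.1 s
                _ = dist ν ν' := (Subtype.dist_eq ν ν').symm
          _ = (n:ℝ) * dist ν ν' := by
              rw [Finset.sum_const, Finset.card_univ, nsmul_eq_mul]
      calc |(g^[m] ν).1 b - (g^[m] ν').1 b| ≤ K ^ m * ∑ s, |ν.1 s - ν'.1 s| := h1.trans h2
        _ ≤ K ^ m * ((n:ℝ) * dist ν ν') := by
            exact mul_le_mul_of_nonneg_left h3 (pow_nonneg hK0 m)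
        _ = (c:ℝ) * dist ν ν' := by rw [hcK]; ring
  set μhat : ↥Δ := ContractingWith.fixedPoint (g^[m]) hcon with hμhatdef
  have hfix : g^[m] μhat = μhat := hcon.fixedPoint_isFixedPt
  have huniq : ∀ x : ↥Δ, g^[m] x = x → x = μhat := fun x hx => hcon.fixedPoint_unique hx
  have hfixg : ∀ x : ↥Δ, g x = x → x = μhat := by
    intro x hx
    exact huniq x ((Function.IsFixedPt.iterate hx m))
  have hgfix : g μhat = μhat := by
    have h : g^[m] (g μhat) = g μhat := by
      rw [← Function.iterate_succ_apply, Function.iterate_succ_apply', hfix]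
    have := huniq (g μhat) h
    rw [this]
  set μ : S → ℝ := μhat.1 with hμdef
  have hstatQ : act μ Q = μ := congrArg Subtype.val hgfix
  have hcomm : P * Q = Q * P := ((Commute.refl P).pow_right T)
  have hstatP : act μ P = μ := by
    have hmem : act μ P ∈ Δ := hactmem P hP0 hP1 μ μhat.2
    have hgP : g ⟨act μ P, hmem⟩ = ⟨act μ P, hmem⟩ := by
      apply Subtype.ext
      show act (act μ P) Q = act μ P
      rw [act_act, hcomm, ← act_act, hstatQ]
    have := hfixg _ hgP
    exact congrArg Subtype.val this
  have hstatpow : ∀ (x : S → ℝ), act x P = x → ∀ t, act x (P ^ t) = x := by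
    intro x hx t
    induction t with
    | zero =>
      funext s'
      simp [act, Matrix.one_apply]
    | succ j ih =>
      rw [pow_succ, ← act_act, ih, hx]
  -- uniqueness of stationary distribution
  have hstat_uniq : ∀ μ' ∈ Δ, act μ' P = μ' → μ' = μ := by
    intro μ' hμ' hstat
    have hQfix : act μ' Q = μ' := by rw [hQdef]; exact hstatpow μ' hstat T
    have : (⟨μ', hμ'⟩ : ↥Δ) = μhat := hfixg ⟨μ', hμ'⟩ (Subtype.ext hQfix)
    exact congrArg Subtype.val this
  -- constants
  set β : ℝ := max K (1/2) with hβdef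
  have hβ0 : (0:ℝ) < β := lt_of_lt_of_le (by norm_num) (le_max_right _ _)
  have hβ1 : β < 1 := max_lt hK1 (by norm_num)
  have hKβ : K ≤ β := le_max_left _ _
  have hβhalf : (1/2 : ℝ) ≤ β := le_max_right _ _
  set α : ℝ := β ^ ((T:ℝ)⁻¹) with hαdef
  have hT0' : (0:ℝ) < T := by exact_mod_cast hTpos0
  refine ⟨μ, ⟨μhat.2.1, μhat.2.2, fun s' => congrFun hstatP s'⟩, ?_, 4, by norm_num, α,
    Real.rpow_nonneg hβ0.le _, Real.rpow_lt_one hβ0.le hβ1 (by positivity), ?_⟩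
  · rintro μ' ⟨h1, h2, h3⟩
    exact hstat_uniq μ' ⟨h1, h2⟩ (funext h3)
  · intro ν hν0 hν1 t
    set q := t / T with hqdef
    set r := t % T with hrdef
    have hqr : T * q + r = t := Nat.div_add_mod t T
    have hrT : r < T := Nat.mod_lt _ hTpos0
    set x : S → ℝ := ν - μ with hxdef
    have hx0 : ∑ s, x s = 0 := by
      simp only [hxdef, Pi.sub_apply]
      rw [Finset.sum_sub_distrib, hν1, μhat.2.2]; ring
    have hx2 : ∑ s, |x s| ≤ 2 := by
      calc ∑ s, |x s| ≤ ∑ s, (|ν s| + |μ s|) :=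
            Finset.sum_le_sum fun s _ => abs_sub (ν s) (μ s)
        _ = ∑ s, ν s + ∑ s, μ s := by
            rw [Finset.sum_add_distrib]
            congr 1
            · exact Finset.sum_congr rfl fun s _ => abs_of_nonneg (hν0 s)
            · exact Finset.sum_congr rfl fun s _ => abs_of_nonneg (μhat.2.1 s)
        _ = 2 := by rw [hν1, μhat.2.2]; norm_num
    -- contraction through q blocks
    have hQq : ∀ (j : ℕ) (y : S → ℝ), (∑ s, y s = 0) →
        ∑ s', |act y (Q ^ j) s'| ≤ K ^ j * ∑ s, |y s| := by
      intro j
      induction j with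
      | zero =>
        intro y hy
        have : act y (Q ^ 0) = y := by
          funext s'; simp [act, Matrix.one_apply]
        rw [this]; simp
      | succ i ih =>
        intro y hy
        have hsum : ∑ s, act y (Q ^ i) s = 0 := by
          rw [sum_act (Q ^ i) (pow_rowsum Q hQ1 i) y, hy]
        calc ∑ s', |act y (Q ^ (i + 1)) s'|
            = ∑ s', |act (act y (Q ^ i)) Q s'| := by rw [act_act, ← pow_succ]
          _ ≤ K * ∑ s, |act y (Q ^ i) s| := contract Q δ hδ0.le hδle hQ1 _ hsum
          _ ≤ K * (K ^ i * ∑ s, |y s|) := mul_le_mul_of_nonneg_left (ih y hy) hK0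
          _ = K ^ (i + 1) * ∑ s, |y s| := by ring
    have hrstep : ∀ (j : ℕ) (y : S → ℝ), ∑ s', |act y (P ^ j) s'| ≤ ∑ s, |y s| := by
      intro j
      induction j with
      | zero =>
        intro y
        have : act y (P ^ 0) = y := by funext s'; simp [act, Matrix.one_apply]
        rw [this]
      | succ i ih =>
        intro y
        calc ∑ s', |act y (P ^ (i + 1)) s'|
            = ∑ s', |act (act y (P ^ i)) P s'| := by rw [act_act, ← pow_succ]
          _ ≤ ∑ s, |act y (P ^ i) s| := nonexp P hP0 hP1 _
          _ ≤ ∑ s, |y s| := ih y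
    -- the main bound
    have hsplit : act x (P ^ t) = act (act x (Q ^ q)) (P ^ r) := by
      rw [act_act, hQdef, ← pow_mul, ← pow_add, hqr]
    have hbound : ∑ s, |act x (P ^ t) s| ≤ K ^ q * 2 := by
      rw [hsplit]
      calc ∑ s, |act (act x (Q ^ q)) (P ^ r) s| ≤ ∑ s, |act x (Q ^ q) s| := hrstep r _
        _ ≤ K ^ q * ∑ s, |x s| := hQq q x hx0
        _ ≤ K ^ q * 2 := mul_le_mul_of_nonneg_left hx2 (pow_nonneg hK0 q)
    have hgoal_eq : ∀ s, (∑ s0, ν s0 * (P ^ t) s0 s) - μ s = act x (P ^ t) s := by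
      intro s
      have : act x (P ^ t) = act ν (P ^ t) - act μ (P ^ t) := act_sub ν μ (P ^ t)
      rw [this, hstatpow μ hstatP t]
      simp [act]
    -- rpow manipulations
    have hαt : β ^ ((q:ℝ) + 1) ≤ α ^ t := by
      rw [hαdef, ← Real.rpow_natCast (β ^ ((T:ℝ)⁻¹)) t, ← Real.rpow_mul hβ0.le]
      apply Real.rpow_le_rpow_of_exponent_ge hβ0 hβ1.le
      rw [inv_mul_le_iff₀ hT0']
      have h : (t:ℝ) < (T:ℝ) * ((q:ℝ) + 1) := by
        have h2 : t < T * (q + 1) := by rw [Nat.mul_succ]; omega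
        push_cast
        exact_mod_cast h2
      nlinarith
    have hβq : β ^ ((q:ℝ) + 1) = β ^ (q + 1) := by
      rw [← Real.rpow_natCast β (q + 1)]
      push_cast
      ring_nf
    calc ∑ s, |(∑ s0, ν s0 * (P ^ t) s0 s) - μ s|
        = ∑ s, |act x (P ^ t) s| := by
          exact Finset.sum_congr rfl fun s _ => by rw [hgoal_eq s]
      _ ≤ K ^ q * 2 := hbound
      _ ≤ β ^ q * 2 := by
          have := pow_le_pow_left₀ hK0 hKβ q
          linarith
      _ ≤ 4 * β ^ (q + 1) := by
          have hp : 0 ≤ β ^ q := pow_nonneg hβ0.le q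
          have : β ^ (q + 1) = β * β ^ q := by ring
          rw [this]
          nlinarith
      _ ≤ 4 * α ^ t := by
          rw [← hβq]
          linarith
end

section
/- Regret decomposition identity (expectation bound): Suppose for each expert e ∈ E we have constants Kₑ ≥ 0 and real steady-state rewards R̄ᵉ with R̄* = max_e R̄ᵉ attained at e*. Suppose (eₘ) and random average rewards (Xₘ) satisfy E[R̄^{eₘ} − Xₘ | 𝓕ₘ] ≤ K_{eₘ}/Tₘ almost surely, where eₘ is 𝓕ₘ-measurable and Tₘ ≥ T₀ ≥ 1. Then with Δₑ = R̄* − R̄ᵉ, the expected regret satisfies E[n·R̄* − Σ_{m=0}^{n−1} Xₘ] ≤ Σ_{e≠e*} E[Tₑ(n)]·(Δₑ + Kₑ/T₀) + K_{e*}·Σ_{m=0}^{n−1} 1/Tₘ. -/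
/-!
Per iteration, `E[R̄* − Xₘ] = E[R̄* − R̄^{eₘ}] + E[R̄^{eₘ} − Xₘ]`, and the tower property bounds
the second term by `E[K_{eₘ}/Tₘ]`. Splitting by the value of `eₘ`, the terms with `eₘ ≠ e*` are
bounded using `Tₘ ≥ T₀` and the term with `eₘ = e*` by `K_{e*}/Tₘ`; summing over `m` turns
`P(eₘ = e)` into `E[Tₑ(n)]`.
-/

open MeasureTheory Finset

lemma integral_le_of_condExp_le {Ω : Type*} {m m0 : MeasurableSpace Ω} {μ : Measure Ω}
    (hm : m ≤ m0) [SigmaFinite (μ.trim hm)] {f g : Ω → ℝ} (hg : Integrable g μ)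
    (h : μ[f | m] ≤ᵐ[μ] g) : ∫ ω, f ω ∂μ ≤ ∫ ω, g ω ∂μ := by
  rw [← integral_condExp hm]
  exact integral_mono_ae integrable_condExp hg h

section FiniteValued

variable {Ω E : Type*} {m0 : MeasurableSpace Ω} {μ : Measure Ω} [IsFiniteMeasure μ]
  [MeasurableSpace E] [MeasurableSingletonClass E]

lemma integrable_comp_of_fintype [Fintype E] {G : Type*} [NormedAddCommGroup G] {Y : Ω → E}
    (hY : Measurable Y) (f : E → G) :
    Integrable (fun ω => f (Y ω)) μ :=
  Integrable.of_finite.comp_measurable hY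

lemma integral_comp_eq_sum [Fintype E] {G : Type*} [NormedAddCommGroup G] [NormedSpace ℝ G]
    [CompleteSpace G] {Y : Ω → E} (hY : Measurable Y) (f : E → G) :
    ∫ ω, f (Y ω) ∂μ = ∑ x, μ.real {ω | Y ω = x} • f x := by
  rw [← integral_map hY.aemeasurable Integrable.of_finite.aestronglyMeasurable,
    integral_fintype .of_finite]
  simp only [map_measureReal_apply hY (measurableSet_singleton _)]
  rfl

lemma integral_card_filter_eq_sum [DecidableEq E] {Y : ℕ → Ω → E}
    (hY : ∀ m, Measurable (Y m)) (s : Finset ℕ) (x : E) :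
    ∫ ω, ((s.filter fun m => Y m ω = x).card : ℝ) ∂μ = ∑ m ∈ s, μ.real {ω | Y m ω = x} := by
  have hset : ∀ m, MeasurableSet {ω | Y m ω = x} := fun m => hY m (measurableSet_singleton x)
  have hcard : (fun ω => ((s.filter fun m => Y m ω = x).card : ℝ)) =
      fun ω => ∑ m ∈ s, {ω | Y m ω = x}.indicator 1 ω := by
    ext ω
    rw [Finset.card_filter]
    push_cast
    simp only [Set.indicator_apply, Set.mem_ofPred_eq, Pi.one_apply]
  rw [hcard, integral_finsetSum _ fun m _ => (integrable_const 1).indicator (hset m)]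
  exact Finset.sum_congr rfl fun m _ => integral_indicator_one (hset m)

lemma integral_const_sub_le_of_condExp_le [Fintype E] {m : MeasurableSpace Ω} (hm : m ≤ m0)
    {Y : Ω → E} (hY : Measurable[m0] Y) {X : Ω → ℝ} (hX : Integrable X μ) (R K : E → ℝ) (c t : ℝ)
    (h : μ[fun ω => R (Y ω) - X ω | m] ≤ᵐ[μ] fun ω => K (Y ω) / t) :
    ∫ ω, (c - X ω) ∂μ ≤ ∑ x, μ.real {ω | Y ω = x} * (c - R x + K x / t) := by
  have hgap : Integrable (fun ω => c - R (Y ω)) μ :=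
    integrable_comp_of_fintype hY fun x => c - R x
  have hshortfall_int : Integrable (fun ω => R (Y ω) - X ω) μ :=
    (integrable_comp_of_fintype hY R).sub hX
  have hbound_int : Integrable (fun ω => K (Y ω) / t) μ :=
    integrable_comp_of_fintype hY fun x => K x / t
  have hshortfall : ∫ ω, (R (Y ω) - X ω) ∂μ ≤ ∫ ω, K (Y ω) / t ∂μ :=
    integral_le_of_condExp_le hm hbound_int h
  calc ∫ ω, (c - X ω) ∂μ = ∫ ω, (c - R (Y ω)) ∂μ + ∫ ω, (R (Y ω) - X ω) ∂μ := by
        rw [← integral_add hgap hshortfall_int]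
        simp only [sub_add_sub_cancel]
    _ ≤ ∫ ω, (c - R (Y ω)) ∂μ + ∫ ω, K (Y ω) / t ∂μ := by gcongr
    _ = ∑ x, μ.real {ω | Y ω = x} * (c - R x + K x / t) := by
        rw [← integral_add hgap hbound_int]
        exact integral_comp_eq_sum hY fun x => c - R x + K x / t

end FiniteValued

lemma sum_mul_sub_add_div_le {E : Type*} [Fintype E] [DecidableEq E] {p R K : E → ℝ} {x : E}
    {t t₀ : ℝ} (hp : ∀ y, 0 ≤ p y) (hpx : p x ≤ 1) (hK : ∀ y, 0 ≤ K y) (ht₀ : 0 < t₀)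
    (ht : t₀ ≤ t) :
    ∑ y, p y * (R x - R y + K y / t) ≤
      ∑ y ∈ univ.filter (fun y => y ≠ x), p y * (R x - R y + K y / t₀) + K x * (1 / t) := by
  rw [← Finset.sum_erase_add _ _ (mem_univ x), ← filter_ne']
  refine add_le_add (sum_le_sum fun y _ => ?_) ?_
  · gcongr
    exacts [hp y, hK y]
  · calc p x * (R x - R x + K x / t) = p x * (K x / t) := by ring
      _ ≤ 1 * (K x / t) := by gcongr; exact div_nonneg (hK x) (ht₀.trans_le ht).le
      _ = K x * (1 / t) := by ring

theorem stmt_7_general {Ω : Type*} {m0 : MeasurableSpace Ω} {μ : Measure Ω}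
    [IsProbabilityMeasure μ]
    {E : Type*} [Fintype E] [DecidableEq E]
    [MeasurableSpace E] [MeasurableSingletonClass E]
    (𝓕 : Filtration ℕ m0)
    (Rbar K : E → ℝ) (hK : ∀ e', 0 ≤ K e')
    (estar : E)
    (T : ℕ → ℝ) (T₀ : ℝ) (hT₀ : 1 ≤ T₀) (hT : ∀ m, T₀ ≤ T m)
    (e : ℕ → Ω → E) (he : ∀ m, Measurable[𝓕 m] (e m))
    (X : ℕ → Ω → ℝ) (hXmeas : ∀ m, StronglyMeasurable[𝓕 (m + 1)] (X m))
    (hX01 : ∀ m, ∀ᵐ ω ∂μ, X m ω ∈ Set.Icc (0 : ℝ) 1)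
    (hbias : ∀ m, ∀ᵐ ω ∂μ,
      (μ[fun ω' => Rbar (e m ω') - X m ω' | 𝓕 m]) ω ≤ K (e m ω) / T m)
    (n : ℕ) :
    (∫ ω, ((n : ℝ) * Rbar estar - ∑ m ∈ Finset.range n, X m ω) ∂μ) ≤
      (∑ e' ∈ Finset.univ.filter (fun e' => e' ≠ estar),
        (∫ ω, (((Finset.range n).filter (fun m => e m ω = e')).card : ℝ) ∂μ) *
          ((Rbar estar - Rbar e') + K e' / T₀)) +
      K estar * ∑ m ∈ Finset.range n, 1 / T m := by
  have hT₀pos : 0 < T₀ := by linarith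
  have he₀ : ∀ m, Measurable (e m) := fun m => (he m).mono (𝓕.le m) le_rfl
  have hXint : ∀ m, Integrable (X m) μ := fun m =>
    .of_mem_Icc 0 1 ((hXmeas m).mono (𝓕.le (m + 1))).measurable.aemeasurable (hX01 m)
  have hround : ∀ m, ∫ ω, (Rbar estar - X m ω) ∂μ ≤
      ∑ e' ∈ univ.filter (fun e' => e' ≠ estar),
        μ.real {ω | e m ω = e'} * (Rbar estar - Rbar e' + K e' / T₀) + K estar * (1 / T m) :=
    fun m => (integral_const_sub_le_of_condExp_le (𝓕.le m) (he₀ m) (hXint m) Rbar K _ _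
      (hbias m)).trans
      (sum_mul_sub_add_div_le (fun _ => measureReal_nonneg) measureReal_le_one hK hT₀pos (hT m))
  have hregret : ∫ ω, ((n : ℝ) * Rbar estar - ∑ m ∈ range n, X m ω) ∂μ =
      ∑ m ∈ range n, ∫ ω, (Rbar estar - X m ω) ∂μ := by
    have hgap : ∀ m, Integrable (fun ω => Rbar estar - X m ω) μ :=
      fun m => (integrable_const _).sub (hXint m)
    rw [← integral_finsetSum _ fun m _ => hgap m]
    simp [Finset.sum_sub_distrib]
  rw [hregret]
  refine (sum_le_sum fun m _ => hround m).trans_eq ?_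
  simp_rw [integral_card_filter_eq_sum he₀, sum_add_distrib, ← mul_sum, sum_mul]
  rw [sum_comm]

/-- Regret decomposition identity (expectation bound): if at each iteration `m`
the conditional expected shortfall of the realized average reward `Xₘ` from the
steady-state reward of the chosen expert `eₘ` is at most `K_{eₘ}/Tₘ`, then
`E[n·R̄* − Σ Xₘ] ≤ Σ_{e≠e*} E[Tₑ(n)]·(Δₑ + Kₑ/T₀) + K_{e*}·Σ_m 1/Tₘ`. -/
theorem stmt_7 {Ω : Type*} {m0 : MeasurableSpace Ω} {μ : Measure Ω}
    [IsProbabilityMeasure μ]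
    {E : Type*} [Fintype E] [DecidableEq E]
    [MeasurableSpace E] [MeasurableSingletonClass E]
    (𝓕 : Filtration ℕ m0)
    (Rbar K : E → ℝ) (hK : ∀ e', 0 ≤ K e')
    (estar : E) (hstar : ∀ e', Rbar e' ≤ Rbar estar)
    (T : ℕ → ℝ) (T₀ : ℝ) (hT₀ : 1 ≤ T₀) (hT : ∀ m, T₀ ≤ T m)
    (e : ℕ → Ω → E) (he : ∀ m, Measurable[𝓕 m] (e m))
    (X : ℕ → Ω → ℝ) (hXmeas : ∀ m, StronglyMeasurable[𝓕 (m + 1)] (X m))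
    (hX01 : ∀ m, ∀ᵐ ω ∂μ, X m ω ∈ Set.Icc (0 : ℝ) 1)
    (hbias : ∀ m, ∀ᵐ ω ∂μ,
      (μ[fun ω' => Rbar (e m ω') - X m ω' | 𝓕 m]) ω ≤ K (e m ω) / T m)
    (n : ℕ) :
    (∫ ω, ((n : ℝ) * Rbar estar - ∑ m ∈ Finset.range n, X m ω) ∂μ) ≤
      (∑ e' ∈ Finset.univ.filter (fun e' => e' ≠ estar),
        (∫ ω, (((Finset.range n).filter (fun m => e m ω = e')).card : ℝ) ∂μ) *
          ((Rbar estar - Rbar e') + K e' / T₀)) +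
      K estar * ∑ m ∈ Finset.range n, 1 / T m :=
  stmt_7_general 𝓕 Rbar K hK estar T T₀ hT₀ hT e he X hXmeas hX01 hbias n
end
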